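/- arXiv:1802.07609 — 2 statements merged into one kernel-verified Lean document; each statement's English description precedes it below -/
import Mathlib

section
/- For every integer k ≥ 1, every real x ≥ 2 and every H > 0, one has S(x, H) ≤ 2 · (2/H)^{2k} · M_{2k}(x, H/2). -/
open scoped Classical

/-- The n-th prime (0-indexed: `nthPrime 0 = 2`). -/
noncomputable def nthPrime (n : ℕ) : ℕ := Nat.nth Nat.Prime n

/-- The indices n with p_{n+1} ≤ x and p_{n+1} - p_n ≥ H. -/
noncomputable def gapSet (x H : ℝ) : Finset ℕ :=
  (Finset.range ⌈x⌉₊).filter fun n =>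
    (nthPrime (n + 1) : ℝ) ≤ x ∧ H ≤ (nthPrime (n + 1) : ℝ) - nthPrime n

/-- S(x, H): the sum of gaps p_{n+1} - p_n over pairs with p_{n+1} ≤ x and gap ≥ H. -/
noncomputable def Sgap (x H : ℝ) : ℝ :=
  ∑ n ∈ gapSet x H, ((nthPrime (n + 1) : ℝ) - nthPrime n)

/-- The Chebyshev theta function θ(t) = Σ_{p ≤ t} log p. -/
noncomputable def chebTheta (t : ℝ) : ℝ :=
  ∑ p ∈ (Finset.range (⌊t⌋₊ + 1)).filter Nat.Prime, Real.log p

/-- The 2k-th moment M_{2k}(x, h) = ∫₁ˣ (θ(y+h) - θ(y) - h)^{2k} dy. -/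
noncomputable def Mmom (k : ℕ) (x h : ℝ) : ℝ :=
  ∫ y in (1:ℝ)..x, (chebTheta (y + h) - chebTheta y - h) ^ (2 * k)

/-!
On the part `[p_n, p_{n+1} - h)` of a prime gap the interval `(y, y + h]` contains no prime, so
`θ(y + h) - θ(y) - h = -h` there and the integrand of `M_{2k}(x, h)` equals `h^{2k}`. For a gap of
length `g ≥ H = 2h` this part has length `g - h ≥ g / 2`, so it contributes at least
`(g / 2) (H / 2)^{2k}` to the moment; these parts are disjoint subsets of `(1, x]`.
-/

open MeasureTheory Set Function

theorem MeasureTheory.sum_setIntegral_le_setIntegral {X ι : Type*} [MeasurableSpace X]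
    {μ : Measure X} {f : X → ℝ} {s : Set X} (t : Finset ι) {I : ι → Set X}
    (hf : IntegrableOn f s μ) (hf₀ : 0 ≤ᵐ[μ.restrict s] f) (hI : ∀ i ∈ t, MeasurableSet (I i))
    (hIs : ∀ i ∈ t, I i ⊆ s) (hdisj : Set.Pairwise t (Disjoint on I)) :
    ∑ i ∈ t, ∫ x in I i, f x ∂μ ≤ ∫ x in s, f x ∂μ := by
  rw [← integral_biUnion_finset t hI hdisj fun i hi => hf.mono_set (hIs i hi)]
  exact setIntegral_mono_set hf hf₀ (iUnion₂_subset hIs).eventuallyLE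

lemma nthPrime_strictMono : StrictMono nthPrime :=
  Nat.nth_strictMono Nat.infinite_setOfPred_prime

lemma two_le_nthPrime (n : ℕ) : 2 ≤ nthPrime n :=
  (Nat.prime_nth_prime n).two_le

lemma chebTheta_nonneg (t : ℝ) : 0 ≤ chebTheta t :=
  Finset.sum_nonneg fun p hp =>
    Real.log_nonneg (by exact_mod_cast (Finset.mem_filter.1 hp).2.one_lt.le)

lemma chebTheta_monotone : Monotone chebTheta := fun a b hab =>
  Finset.sum_le_sum_of_subset_of_nonneg
    (Finset.filter_subset_filter _ (Finset.range_subset_range.2 (by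
      have := Nat.floor_mono hab; omega)))
    fun p hp _ => Real.log_nonneg (by exact_mod_cast (Finset.mem_filter.1 hp).2.one_lt.le)

lemma chebTheta_eq_of_forall_prime_le_iff {y t : ℝ} (hy : 0 ≤ y) (ht : 0 ≤ t)
    (h : ∀ p : ℕ, p.Prime → ((p : ℝ) ≤ y ↔ (p : ℝ) ≤ t)) : chebTheta y = chebTheta t := by
  unfold chebTheta
  congr 1
  ext p
  simp only [Finset.mem_filter, Finset.mem_range, Nat.lt_succ_iff, Nat.le_floor_iff hy,
    Nat.le_floor_iff ht]
  exact and_congr_left (h p)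

lemma chebTheta_eq_of_nthPrime_le_of_lt_nthPrime_succ {n : ℕ} {y t : ℝ}
    (hy : (nthPrime n : ℝ) ≤ y) (hyt : y ≤ t) (ht : t < nthPrime (n + 1)) :
    chebTheta t = chebTheta y := by
  have hy₀ : (0 : ℝ) ≤ y := le_trans (by positivity) hy
  refine chebTheta_eq_of_forall_prime_le_iff (hy₀.trans hyt) hy₀ fun p hp =>
    ⟨fun hpt => ?_, fun hpy => hpy.trans hyt⟩
  have : p ≤ nthPrime n := Nat.le_nth_of_lt_nth_succ (by exact_mod_cast hpt.trans_lt ht) hp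
  exact (Nat.cast_le.2 this).trans hy

noncomputable def gapInterval (h : ℝ) (n : ℕ) : Set ℝ :=
  Ico (nthPrime n : ℝ) (nthPrime (n + 1) - h)

section gapInterval

variable {h : ℝ} {n : ℕ}

lemma measurableSet_gapInterval : MeasurableSet (gapInterval h n) :=
  measurableSet_Ico

lemma chebTheta_add_eq_of_mem_gapInterval (hh : 0 ≤ h) {y : ℝ} (hy : y ∈ gapInterval h n) :
    chebTheta (y + h) = chebTheta y :=
  chebTheta_eq_of_nthPrime_le_of_lt_nthPrime_succ hy.1 (by linarith) (by linarith [hy.2])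

lemma pairwise_disjoint_gapInterval (hh : 0 ≤ h) : Pairwise (Disjoint on gapInterval h) := by
  refine (pairwise_disjoint_on _).2 fun m n hmn => ?_
  have : (nthPrime (m + 1) : ℝ) ≤ nthPrime n := by
    exact_mod_cast nthPrime_strictMono.monotone hmn
  exact Set.disjoint_left.2 fun y hym hyn => by linarith [hym.2, hyn.1]

lemma gapInterval_subset_Ioc (hh : 0 ≤ h) {x : ℝ} (hx : (nthPrime (n + 1) : ℝ) ≤ x) :
    gapInterval h n ⊆ Ioc 1 x := by
  have : (2 : ℝ) ≤ nthPrime n := by exact_mod_cast two_le_nthPrime n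
  exact fun y hy => ⟨by linarith [hy.1], by linarith [hy.2]⟩

lemma volume_real_gapInterval (hgap : h ≤ (nthPrime (n + 1) : ℝ) - nthPrime n) :
    volume.real (gapInterval h n) = nthPrime (n + 1) - h - nthPrime n :=
  Real.volume_real_Ico_of_le (by linarith)

end gapInterval

noncomputable def momentIntegrand (k : ℕ) (h y : ℝ) : ℝ :=
  (chebTheta (y + h) - chebTheta y - h) ^ (2 * k)

section momentIntegrand

variable {k : ℕ} {h : ℝ}

lemma momentIntegrand_nonneg (y : ℝ) : 0 ≤ momentIntegrand k h y :=
  (even_two_mul k).pow_nonneg _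

lemma measurable_momentIntegrand : Measurable (momentIntegrand k h) :=
  (((chebTheta_monotone.comp (monotone_id.add_const h)).measurable.sub
    chebTheta_monotone.measurable).sub measurable_const).pow_const _

lemma integrableOn_momentIntegrand_Ioc (a b : ℝ) :
    IntegrableOn (momentIntegrand k h) (Ioc a b) := by
  refine Measure.integrableOn_of_bounded (M := (chebTheta (b + h) + chebTheta b + |h|) ^ (2 * k))
    measure_Ioc_lt_top.ne measurable_momentIntegrand.aestronglyMeasurable
    ((ae_restrict_iff' measurableSet_Ioc).2 (ae_of_all _ fun y hy => ?_))
  have h₁ := chebTheta_monotone (add_le_add_left hy.2 h)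
  have h₂ := chebTheta_monotone hy.2
  have h₃ := chebTheta_nonneg (y + h)
  have h₄ := chebTheta_nonneg y
  have hbound :
      |chebTheta (y + h) - chebTheta y - h| ≤ chebTheta (b + h) + chebTheta b + |h| := by
    rw [abs_le]; constructor <;> linarith [neg_abs_le h, le_abs_self h]
  rw [Real.norm_eq_abs, momentIntegrand, abs_pow]
  exact pow_le_pow_left₀ (abs_nonneg _) hbound _

lemma momentIntegrand_eq_of_mem_gapInterval (hh : 0 ≤ h) {n : ℕ} {y : ℝ}
    (hy : y ∈ gapInterval h n) : momentIntegrand k h y = h ^ (2 * k) := by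
  rw [momentIntegrand, chebTheta_add_eq_of_mem_gapInterval hh hy, sub_self, zero_sub,
    (even_two_mul k).neg_pow]

lemma setIntegral_momentIntegrand_gapInterval (hh : 0 ≤ h) {n : ℕ}
    (hgap : h ≤ (nthPrime (n + 1) : ℝ) - nthPrime n) :
    ∫ y in gapInterval h n, momentIntegrand k h y
      = (nthPrime (n + 1) - h - nthPrime n) * h ^ (2 * k) := by
  rw [setIntegral_congr_fun measurableSet_gapInterval fun y hy =>
      momentIntegrand_eq_of_mem_gapInterval hh hy,
    setIntegral_const, volume_real_gapInterval hgap, smul_eq_mul]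

lemma Mmom_eq_setIntegral {x : ℝ} (hx : 1 ≤ x) :
    Mmom k x h = ∫ y in Ioc 1 x, momentIntegrand k h y :=
  intervalIntegral.integral_of_le hx

end momentIntegrand

theorem Sgap_le_moment_general (k : ℕ) (x H : ℝ) (hx : 2 ≤ x) (hH : 0 < H) :
    Sgap x H ≤ 2 * (2 / H) ^ (2 * k) * Mmom k x (H / 2) := by
  set h := H / 2 with h_def
  have hh : 0 ≤ h := by positivity
  have hscale : (2 / H) ^ (2 * k) * h ^ (2 * k) = 1 := by
    have : 2 / H * h = 1 := by rw [h_def]; field_simp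
    rw [← mul_pow, this, one_pow]
  have hmem n (hn : n ∈ gapSet x H) := (Finset.mem_filter.1 hn).2
  calc Sgap x H
      ≤ ∑ n ∈ gapSet x H,
          2 * (2 / H) ^ (2 * k) * ∫ y in gapInterval h n, momentIntegrand k h y := by
        refine Finset.sum_le_sum fun n hn => ?_
        have hgap := (hmem n hn).2
        rw [setIntegral_momentIntegrand_gapInterval hh (by linarith)]
        set g : ℝ := nthPrime (n + 1) - nthPrime n
        calc g ≤ 2 * (g - h) := by linarith
          _ = _ := by linear_combination (-2 * (g - h)) * hscale
    _ ≤ 2 * (2 / H) ^ (2 * k) * ∫ y in Ioc 1 x, momentIntegrand k h y := by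
        rw [← Finset.mul_sum]
        gcongr
        exact sum_setIntegral_le_setIntegral _ (integrableOn_momentIntegrand_Ioc 1 x)
          (ae_of_all _ momentIntegrand_nonneg) (fun _ _ => measurableSet_gapInterval)
          (fun n hn => gapInterval_subset_Ioc hh (hmem n hn).1)
          ((pairwise_disjoint_gapInterval hh).set_pairwise _)
    _ = 2 * (2 / H) ^ (2 * k) * Mmom k x h := by rw [Mmom_eq_setIntegral (by linarith)]

/-- For every k ≥ 1, x ≥ 2, H > 0: S(x, H) ≤ 2 (2/H)^{2k} M_{2k}(x, H/2). -/
theorem Sgap_le_moment (k : ℕ) (hk : 1 ≤ k) (x H : ℝ) (hx : 2 ≤ x) (hH : 0 < H) :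
    Sgap x H ≤ 2 * (2 / H) ^ (2 * k) * Mmom k x (H / 2) :=
  Sgap_le_moment_general k x H hx hH
end

section
/- The pair singular series satisfies Σ_{d ≤ h} 𝔖(d) ~ h as h → ∞, i.e., (1/h) Σ_{1 ≤ d ≤ h} 𝔖(d) → 1. -/
open scoped Classical

/-- The twin prime constant C₂ = ∏_{p > 2} (1 - 1/(p-1)²). -/
noncomputable def twinPrimeConst : ℝ :=
  ∏' p : Nat.Primes, if 2 < (p : ℕ) then 1 - 1 / (((p : ℕ) : ℝ) - 1) ^ 2 else 1

/-- The pair singular series 𝔖(d): for even d, 2 C₂ ∏_{p ∣ d, p > 2} (p-1)/(p-2);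
for odd d, 0. -/
noncomputable def pairSingularSeries (d : ℕ) : ℝ :=
  if Even d then
    2 * twinPrimeConst *
      ∏ p ∈ d.primeFactors.filter (fun p => 2 < p),
        (((p : ℝ) - 1) / ((p : ℝ) - 2))
  else 0

/-!
For even `d = 2n` one has `𝔖(2n) = 2 C₂ ∑_{q ∣ n} g(q)`, where `g(q) = ∏_{p ∣ q} 1/(p - 2)` on odd
squarefree `q` and `g = 0` otherwise. Swapping the sums, `∑_{d ≤ h} 𝔖(d) = 2 C₂ ∑_q g(q) ⌊h/(2q)⌋`,
and since `∑_q g(q)/q` converges, dominated convergence gives `(1/h) ∑_{d ≤ h} 𝔖(d) → C₂ ∑_q g(q)/q`.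
Finally `∑_q g(q)/q = ∏_{p > 2} (1 + 1/(p(p - 2)))` by expanding the Euler product over finite
sets of primes, and each factor is the inverse of the factor `1 - 1/(p - 1)²` of `C₂`.
-/

open Finset Filter Topology
open scoped ArithmeticFunction.zeta

namespace Nat.Primes

theorem squarefree_prod (t : Finset Nat.Primes) : Squarefree (∏ p ∈ t, (p : ℕ)) :=
  squarefree_prod_of_pairwise_isCoprime
    (fun p _ q _ hpq => Nat.coprime_iff_isRelPrime.mp <|
      (Nat.coprime_primes p.prop q.prop).mpr ((coe_nat_inj p q).not.mpr hpq))
    fun p _ => p.prop.prime.squarefree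

theorem primeFactors_prod (t : Finset Nat.Primes) :
    (∏ p ∈ t, (p : ℕ)).primeFactors = t.image (↑) := by
  have h := Nat.primeFactors_prod (s := t.image (↑)) fun p hp => by
    obtain ⟨q, -, rfl⟩ := mem_image.mp hp
    exact q.prop
  rwa [prod_image fun p _ q _ => (coe_nat_inj p q).mp] at h

theorem prod_injective : Function.Injective fun t : Finset Nat.Primes => ∏ p ∈ t, (p : ℕ) :=
  fun s t hst => image_injective coe_nat_injective <|
    (primeFactors_prod s).symm.trans <| (congrArg _ hst).trans (primeFactors_prod t)

theorem exists_prod_eq {n : ℕ} (hn : Squarefree n) :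
    ∃ t : Finset Nat.Primes, ∏ p ∈ t, (p : ℕ) = n :=
  ⟨n.primeFactors.preimage (↑) coe_nat_injective.injOn,
    (prod_preimage _ _ _ id fun p hp hp' =>
      (hp' ⟨⟨p, Nat.prime_of_mem_primeFactors hp⟩, rfl⟩).elim).trans
      (Nat.prod_primeFactors_of_squarefree hn)⟩

end Nat.Primes

theorem tendsto_nat_div_div_atTop {n : ℕ} (hn : n ≠ 0) :
    Tendsto (fun N : ℕ => ((N / n : ℕ) : ℝ) / N) atTop (𝓝 (n : ℝ)⁻¹) := by
  have hn' : (n : ℝ) ≠ 0 := Nat.cast_ne_zero.mpr hn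
  have h := (tendsto_nat_floor_div_atTop.comp (tendsto_natCast_atTop_atTop.atTop_div_const
    (Nat.cast_pos.mpr (Nat.pos_of_ne_zero hn)))).mul_const (n : ℝ)⁻¹
  rw [one_mul] at h
  refine h.congr fun N => ?_
  simp only [Function.comp_apply, Nat.floor_div_eq_div]
  rw [div_div_eq_mul_div, div_mul_eq_mul_div, mul_assoc, mul_inv_cancel₀ hn', mul_one]

theorem natCast_div_div_le_inv (N n : ℕ) : ((N / n : ℕ) : ℝ) / N ≤ (n : ℝ)⁻¹ := by
  rcases eq_or_ne N 0 with rfl | hN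
  · simp
  · calc ((N / n : ℕ) : ℝ) / N ≤ (N / n : ℝ) / N := by gcongr; exact Nat.cast_div_le
      _ = (n : ℝ)⁻¹ := by field_simp

theorem Finset.sum_Ioc_eq_sum_Ioc_div_two {M : Type*} [AddCommMonoid M] {f : ℕ → M}
    (hf : ∀ d, Odd d → f d = 0) (h : ℕ) :
    ∑ d ∈ Ioc 0 h, f d = ∑ n ∈ Ioc 0 (h / 2), f (2 * n) := by
  rw [← sum_image fun m _ n _ => (Nat.mul_right_inj two_ne_zero).mp]
  refine (sum_subset (fun d hd => ?_) fun d hd hd' => hf d ?_).symm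
  · obtain ⟨n, hn, rfl⟩ := mem_image.mp hd
    simp only [mem_Ioc] at hn ⊢
    omega
  · rw [← Nat.not_even_iff_odd]
    rintro ⟨n, rfl⟩
    refine hd' (mem_image.mpr ⟨n, ?_, by ring⟩)
    simp only [mem_Ioc] at hd ⊢
    omega

namespace ArithmeticFunction

variable {R : Type*}

def squarefreeProd [CommSemiring R] (w : ℕ → R) : ArithmeticFunction R :=
  ⟨fun n => if Squarefree n then ∏ p ∈ n.primeFactors, w p else 0, by simp⟩

section CommSemiring

variable [CommSemiring R] (w : ℕ → R)

theorem squarefreeProd_apply (n : ℕ) :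
    squarefreeProd w n = if Squarefree n then ∏ p ∈ n.primeFactors, w p else 0 :=
  rfl

theorem squarefreeProd_mul_zeta_apply {n : ℕ} (hn : n ≠ 0) :
    (squarefreeProd w * ζ) n = ∏ p ∈ n.primeFactors, (1 + w p) := by
  rw [coe_mul_zeta_apply, prod_one_add]
  simp_rw [squarefreeProd_apply]
  rw [← sum_filter, Nat.sum_divisors_filter_squarefree hn, Nat.factors_eq]
  refine sum_congr rfl fun t ht => ?_
  rw [Finset.prod_val, Function.id_def, Nat.primeFactors_prod fun p hp =>
    Nat.prime_of_mem_primeFactors (mem_powerset.mp ht hp)]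

theorem squarefreeProd_prod_primes (t : Finset Nat.Primes) :
    squarefreeProd w (∏ p ∈ t, (p : ℕ)) = ∏ p ∈ t, w p := by
  rw [squarefreeProd_apply, if_pos (Nat.Primes.squarefree_prod t), Nat.Primes.primeFactors_prod,
    prod_image fun p _ q _ => (Nat.Primes.coe_nat_inj p q).mp]

theorem hasSum_squarefreeProd_iff [TopologicalSpace R] {a : R} :
    HasSum (squarefreeProd w) a ↔ HasSum (fun t : Finset Nat.Primes => ∏ p ∈ t, w p) a := by
  rw [← Nat.Primes.prod_injective.hasSum_iff fun n hn => ?_]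
  · simp only [Function.comp_def, squarefreeProd_prod_primes]
  · rw [squarefreeProd_apply, if_neg fun hsq => hn (Nat.Primes.exists_prod_eq hsq)]

end CommSemiring

theorem squarefreeProd_div_self [Semifield R] (w : ℕ → R) (n : ℕ) :
    squarefreeProd (fun p => w p / p) n = squarefreeProd w n / n := by
  rw [squarefreeProd_apply, squarefreeProd_apply]
  split_ifs with hn
  · rw [prod_div_distrib, ← Nat.cast_prod, Nat.prod_primeFactors_of_squarefree hn]
  · rw [zero_div]

theorem squarefreeProd_nonneg [CommSemiring R] [PartialOrder R] [IsOrderedRing R] {w : ℕ → R}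
    (hw : ∀ p, p.Prime → 0 ≤ w p) (n : ℕ) : 0 ≤ squarefreeProd w n := by
  rw [squarefreeProd_apply]
  split_ifs
  · exact prod_nonneg fun p hp => hw p (Nat.prime_of_mem_primeFactors hp)
  · exact le_rfl

theorem hasSum_squarefreeProd [NormedCommRing R] [NormOneClass R] [CompleteSpace R] (w : ℕ → R)
    (hw : Summable fun p : Nat.Primes => ‖w p‖) :
    HasSum (squarefreeProd w) (∏' p : Nat.Primes, (1 + w p)) := by
  have hsum := (summable_finsetProd_of_summable_norm hw).hasSum
  rw [hasSum_squarefreeProd_iff, (hasProd_one_add_of_hasSum_prod hsum).tprod_eq]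
  exact hsum

theorem tendsto_sum_Ioc_mul_zeta_div (f : ArithmeticFunction ℝ)
    (hf : Summable fun n => f n / n) :
    Tendsto (fun N : ℕ => (∑ n ∈ Ioc 0 N, (f * ζ) n) / N) atTop (𝓝 (∑' n, f n / n)) := by
  have hsum (N : ℕ) :
      (∑ n ∈ Ioc 0 N, (f * ζ) n) / N = ∑' n, f n * (((N / n : ℕ) : ℝ) / N) := by
    rw [sum_Ioc_mul_zeta_eq_sum, sum_div, tsum_eq_sum (s := Ioc 0 N)]
    · exact sum_congr rfl fun n _ => mul_div_assoc _ _ _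
    · intro n hn
      rcases eq_or_ne n 0 with rfl | hn0
      · rw [map_zero, zero_mul]
      · simp only [mem_Ioc, not_and, not_le] at hn
        rw [Nat.div_eq_of_lt (hn (Nat.pos_of_ne_zero hn0)), Nat.cast_zero, zero_div, mul_zero]
  simp_rw [hsum]
  refine tendsto_tsum_of_dominated_convergence hf.norm (fun n => ?_) (.of_forall fun N n => ?_)
  · rcases eq_or_ne n 0 with rfl | hn
    · simp only [map_zero, zero_mul, zero_div, tendsto_const_nhds]
    · simpa only [div_eq_mul_inv] using (tendsto_nat_div_div_atTop hn).const_mul (f n)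
  · calc ‖f n * (((N / n : ℕ) : ℝ) / N)‖ = ‖f n‖ * (((N / n : ℕ) : ℝ) / N) := by
          rw [norm_mul, Real.norm_of_nonneg (div_nonneg (Nat.cast_nonneg _) (Nat.cast_nonneg _))]
      _ ≤ ‖f n‖ * (n : ℝ)⁻¹ := by gcongr; exact natCast_div_div_le_inv N n
      _ = ‖f n / n‖ := by rw [norm_div, Real.norm_natCast, div_eq_mul_inv]

end ArithmeticFunction

open ArithmeticFunction

/-- Since `(2 - 2)⁻¹ = 0` in Lean, this vanishes on even numbers; on odd squarefree `q` it is
`∏_{p ∣ q} 1 / (p - 2)`. -/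
noncomputable def pairSingularWeight : ArithmeticFunction ℝ :=
  squarefreeProd fun p => ((p : ℝ) - 2)⁻¹

theorem pairSingularWeight_nonneg (n : ℕ) : 0 ≤ pairSingularWeight n :=
  squarefreeProd_nonneg
    (fun p hp => inv_nonneg.mpr (sub_nonneg.mpr (by exact_mod_cast hp.two_le))) n

theorem ite_two_lt_sub_one_div_sub_two {p : ℕ} (hp : p.Prime) :
    (if 2 < p then ((p : ℝ) - 1) / ((p : ℝ) - 2) else 1) = 1 + ((p : ℝ) - 2)⁻¹ := by
  split_ifs with h
  · have : (p : ℝ) - 2 ≠ 0 := sub_ne_zero.mpr (by exact_mod_cast h.ne')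
    field_simp
    ring
  · rw [show p = 2 by have := hp.two_le; omega]
    norm_num

theorem pairSingularSeries_two_mul {n : ℕ} (hn : n ≠ 0) :
    pairSingularSeries (2 * n) = 2 * twinPrimeConst * (pairSingularWeight * ζ) n := by
  rw [pairSingularSeries, if_pos (even_two_mul n), pairSingularWeight,
    squarefreeProd_mul_zeta_apply _ hn, prod_filter,
    prod_congr rfl fun p hp => ite_two_lt_sub_one_div_sub_two (Nat.prime_of_mem_primeFactors hp),
    Nat.primeFactors_mul two_ne_zero hn, Nat.prime_two.primeFactors, singleton_union,
    prod_insert_of_eq_one_if_notMem fun _ => by norm_num]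

theorem sum_Icc_pairSingularSeries (h : ℕ) :
    ∑ d ∈ Icc 1 h, pairSingularSeries d =
      2 * twinPrimeConst * ∑ n ∈ Ioc 0 (h / 2), (pairSingularWeight * ζ) n := by
  rw [show Icc 1 h = Ioc 0 h from Icc_add_one_left_eq_Ioc 0 h,
    sum_Ioc_eq_sum_Ioc_div_two fun d hd => by
      rw [pairSingularSeries, if_neg (Nat.not_even_iff_odd.mpr hd)], mul_sum]
  exact sum_congr rfl fun n hn => pairSingularSeries_two_mul (mem_Ioc.mp hn).1.ne'

theorem summable_norm_inv_sub_two_div :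
    Summable fun p : Nat.Primes => ‖((p : ℝ) - 2)⁻¹ / p‖ := by
  have hs : Summable fun p : Nat.Primes => 3 * ((p : ℝ) ^ 2)⁻¹ :=
    ((Real.summable_nat_pow_inv.mpr one_lt_two).comp_injective
      Nat.Primes.coe_nat_injective).mul_left 3
  refine hs.of_nonneg_of_le (fun _ => norm_nonneg _) fun p => ?_
  rcases p.prop.two_le.eq_or_lt with h2 | h3
  · rw [← h2]
    norm_num
  · have h3 : (3 : ℝ) ≤ p := by exact_mod_cast h3
    have hp2 : (0 : ℝ) ≤ p - 2 := by linarith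
    calc ‖((p : ℝ) - 2)⁻¹ / p‖ = (((p : ℝ) - 2) * p)⁻¹ := by
          rw [Real.norm_of_nonneg (by positivity), div_eq_mul_inv, mul_inv]
      _ ≤ ((p : ℝ) ^ 2 / 3)⁻¹ := inv_anti₀ (by positivity) (by nlinarith)
      _ = 3 * ((p : ℝ) ^ 2)⁻¹ := by rw [inv_div, div_eq_mul_inv]

theorem twinPrimeConst_factor_eq {p : ℕ} (hp : p.Prime) :
    (if 2 < p then 1 - 1 / ((p : ℝ) - 1) ^ 2 else 1) = (1 + ((p : ℝ) - 2)⁻¹ / p)⁻¹ := by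
  split_ifs with h
  · have h3 : (3 : ℝ) ≤ p := by exact_mod_cast h
    have : (p : ℝ) - 1 ≠ 0 := by linarith
    have : (p : ℝ) - 2 ≠ 0 := by linarith
    have : (p : ℝ) ≠ 0 := by linarith
    refine eq_inv_of_mul_eq_one_left ?_
    field_simp
    ring
  · rw [show p = 2 by have := hp.two_le; omega]
    norm_num

theorem hasSum_pairSingularWeight_div :
    HasSum (fun n => pairSingularWeight n / n) (∏' p : Nat.Primes, (1 + ((p : ℝ) - 2)⁻¹ / p)) := by
  simp_rw [pairSingularWeight, ← squarefreeProd_div_self]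
  exact hasSum_squarefreeProd _ summable_norm_inv_sub_two_div

theorem one_le_tprod_one_add_inv_sub_two_div :
    1 ≤ ∏' p : Nat.Primes, (1 + ((p : ℝ) - 2)⁻¹ / p) := by
  have h := le_hasSum hasSum_pairSingularWeight_div 1 fun n _ =>
    div_nonneg (pairSingularWeight_nonneg n) n.cast_nonneg
  rwa [Nat.cast_one, div_one, pairSingularWeight, squarefreeProd_apply, if_pos squarefree_one,
    Nat.primeFactors_one, prod_empty] at h

theorem twinPrimeConst_eq_inv_tprod :
    twinPrimeConst = (∏' p : Nat.Primes, (1 + ((p : ℝ) - 2)⁻¹ / p))⁻¹ := by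
  rw [twinPrimeConst, tprod_congr fun p => twinPrimeConst_factor_eq p.prop]
  exact ((multipliable_one_add_of_summable summable_norm_inv_sub_two_div).hasProd.inv₀
    (one_pos.trans_le one_le_tprod_one_add_inv_sub_two_div).ne').tprod_eq

/-- The pair singular series has average value 1: Σ_{d ≤ h} 𝔖(d) ~ h as h → ∞. -/
theorem pairSingularSeries_average :
    Filter.Tendsto (fun h : ℕ => (∑ d ∈ Finset.Icc 1 h, pairSingularSeries d) / h)
      Filter.atTop (nhds 1) := by
  have hB := (one_pos.trans_le one_le_tprod_one_add_inv_sub_two_div).ne'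
  have hmean := (tendsto_sum_Ioc_mul_zeta_div _ hasSum_pairSingularWeight_div.summable).comp
    (Nat.tendsto_div_const_atTop two_ne_zero)
  have hlim := (hmean.mul (tendsto_nat_div_div_atTop two_ne_zero)).const_mul (2 * twinPrimeConst)
  rw [hasSum_pairSingularWeight_div.tsum_eq] at hlim
  convert hlim using 2 with h
  · rw [sum_Icc_pairSingularSeries, Function.comp_apply, mul_div_assoc]
    rcases eq_or_ne (h / 2) 0 with h0 | h0
    · simp [h0]
    · rw [div_mul_div_cancel₀ (Nat.cast_ne_zero.mpr h0)]
  · rw [twinPrimeConst_eq_inv_tprod, Nat.cast_ofNat, mul_assoc, ← mul_assoc _⁻¹,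
      inv_mul_cancel₀ hB, one_mul, mul_inv_cancel₀ two_ne_zero]
end
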